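/- Let A be a weight system with all inequalities of types (a) and (b) strict. Then for each 1 ≤ i_1 < … < i_k ≤ n, the minimizing sequence in the previous statement is unique up to permutation: the only multiset of pairs {(x_m,y_m)} achieving Σ a_{x_m,y_m} = a_{p_1,q_1}+…+a_{p_l,q_l} with f_{x_1,y_1}⋯f_{x_N,y_N}·e_{1,…,k} = ±e_{i_1,…,i_k} is {(p_1,q_1),…,(p_l,q_l)}. -/

import Mathlib

/-!
Run through the moves `f_{x,y}` while maintaining a matching of the holes `{1,…,k} \ T` with the
excess `T \ {1,…,k}` of the current index set `T`, never heavier than the moves made so far. A move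
with `x ≤ k < y` simply adds its pair; any other move replaces an existing pair, `(y,q)` by
`(x,q)` or `(p,x)` by `(p,y)`, which by the triangle inequality (A) raises the weight of the
matching by strictly less than the weight of the move. Among all matchings of `{1,…,k} \ I` with `I \ {1,…,k}`, the nested one is the
unique cheapest by the uncrossing inequality (B): uncross the pair through the smallest hole with
the pair through the largest excess element. So equality of weights forces every move to be an
added pair and the final matching to be the nested one. The strict forms of (A) and (B) follow
from the local ones by telescoping.
-/

/-- The action of a product of root vectors `f_{x_1,y_1} ⋯ f_{x_N,y_N}` on the basis
of `Λ^k ℂ^n`, encoded on index sets: the rightmost factor acts first, `f_{x,y}`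
replaces `x` by `y` in the set (and kills the vector if `x` is absent or `y` present).
`applySeq L S = some I` expresses that the product maps `e_S` to `± e_I`. -/
def applySeq : List (ℕ × ℕ) → Finset ℕ → Option (Finset ℕ)
  | [], S => some S
  | p :: rest, S => (applySeq rest S).bind fun S' =>
      if p.1 ∈ S' ∧ p.2 ∉ S' then some (insert p.2 (S'.erase p.1)) else none

/-- The canonical antichain matching: `p_1 < … < p_l` the elements of `{1,…,k} \ I`
paired with `q_1 > … > q_l` the elements of `I \ {1,…,k}`. -/
def canonPairs (k : ℕ) (I : Finset ℕ) : List (ℕ × ℕ) :=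
  ((Finset.Icc 1 k \ I).sort (· ≤ ·)).zip (((I \ Finset.Icc 1 k).sort (· ≤ ·)).reverse)

open Finset

-- The inequalities of types (A) and (B), in strict form.
def StrictTriangle (n : ℕ) (a : ℕ → ℕ → ℤ) : Prop :=
  ∀ ⦃x y z⦄, 1 ≤ x → x < y → y < z → z ≤ n → a x z < a x y + a y z

def StrictUncrossing (n : ℕ) (a : ℕ → ℕ → ℤ) : Prop :=
  ∀ ⦃i i' j j'⦄, 1 ≤ i → i < i' → i' < j → j < j' → j' ≤ n → a i j' + a i' j < a i j + a i' j'

section Weights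

variable {n : ℕ} {a : ℕ → ℕ → ℤ}

theorem strictUncrossing_of_adjacent
    (hb : ∀ i j, 1 ≤ i → i + 1 < j → j + 1 ≤ n → a i j + a (i+1) (j+1) > a i (j+1) + a (i+1) j) :
    StrictUncrossing n a := by
  have row : ∀ i j j', 1 ≤ i → i + 1 < j → j < j' → j' ≤ n →
      a i j' + a (i+1) j < a i j + a (i+1) j' := by
    intro i j j' hi hij hjj' hj'n
    induction j', hjj' using Nat.le_induction with
    | base => linarith [hb i j hi hij hj'n]
    | succ j' hj ih => linarith [hb i j' hi (by omega) hj'n, ih (by omega)]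
  intro i i' j j' hi hii' hi'j hjj' hj'n
  induction i', hii' using Nat.le_induction with
  | base => exact row i j j' hi hi'j hjj' hj'n
  | succ i' hi' ih => linarith [row i' j j' (by omega) hi'j hjj' hj'n, ih (by omega)]

theorem strictTriangle_of_adjacent
    (ha : ∀ i, 1 ≤ i → i + 2 ≤ n → a i (i+1) + a (i+1) (i+2) > a i (i+2))
    (hB : StrictUncrossing n a) : StrictTriangle n a := by
  have adj : ∀ x z, 1 ≤ x → x + 1 < z → z ≤ n → a x z < a x (x+1) + a (x+1) z := by
    intro x z hx hxz hzn
    induction z, hxz using Nat.le_induction with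
    | base => exact ha x hx hzn
    | succ z hz ih => linarith [hB hx x.lt_succ_self hz z.lt_succ_self hzn, ih (by omega)]
  intro x y z hx hxy hyz hzn
  obtain ⟨m, rfl⟩ : ∃ m, y = m + 1 := ⟨y - 1, by omega⟩
  have hm := adj m z (by omega) hyz hzn
  rcases (Nat.lt_succ_iff.mp hxy).eq_or_lt with rfl | hxm
  · exact hm
  · linarith [hB hx hxm m.lt_succ_self hyz hzn]

end Weights

section TotalWeight

variable {α β : Type*} [AddCommMonoid β] (c : α → α → β)

def totalWeight (F : Multiset (α × α)) : β :=
  (F.map fun e => c e.1 e.2).sum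

@[simp]
theorem totalWeight_cons (e : α × α) (F : Multiset (α × α)) :
    totalWeight c (e ::ₘ F) = c e.1 e.2 + totalWeight c F := by
  simp [totalWeight]

theorem add_totalWeight_erase [DecidableEq α] {e : α × α} {F : Multiset (α × α)} (he : e ∈ F) :
    c e.1 e.2 + totalWeight c (F.erase e) = totalWeight c F := by
  rw [← totalWeight_cons, Multiset.cons_erase he]

end TotalWeight

section AntitoneMatching

variable {α β : Type*} [LinearOrder α]

theorem Multiset.reverse_sort_le (s : Multiset α) :
    (s.sort (· ≤ ·)).reverse = s.sort (· ≥ ·) :=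
  List.Perm.eq_of_pairwise' (r := (· ≥ ·))
    (by rw [List.pairwise_reverse]; exact Multiset.pairwise_sort _ _)
    (Multiset.pairwise_sort _ _)
    (Multiset.coe_eq_coe.mp (by rw [Multiset.coe_reverse, Multiset.sort_eq, Multiset.sort_eq]))

def antitoneMatching (P Q : Multiset α) : Multiset (α × α) :=
  ((P.sort (· ≤ ·)).zip (Q.sort (· ≥ ·)) : List (α × α))

theorem antitoneMatching_zero_left (Q : Multiset α) : antitoneMatching 0 Q = 0 := by
  simp [antitoneMatching]

theorem antitoneMatching_cons {p q : α} {P Q : Multiset α} (hp : ∀ b ∈ P, p ≤ b)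
    (hq : ∀ b ∈ Q, q ≥ b) :
    antitoneMatching (p ::ₘ P) (q ::ₘ Q) = (p, q) ::ₘ antitoneMatching P Q := by
  rw [antitoneMatching, Multiset.sort_cons _ _ _ hp, Multiset.sort_cons _ _ _ hq]
  rfl

theorem exists_min_fst_max_snd {F : Multiset (α × α)} (hF : F ≠ 0) :
    ∃ p q₁ p₂ q, (p, q₁) ∈ F ∧ (p₂, q) ∈ F ∧ (∀ e ∈ F, p ≤ e.1) ∧ ∀ e ∈ F, e.2 ≤ q := by
  have hne : F.toFinset.Nonempty := by simpa [Finset.nonempty_iff_ne_empty] using hF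
  obtain ⟨⟨p, q₁⟩, h₁, hmin⟩ := F.toFinset.exists_min_image Prod.fst hne
  obtain ⟨⟨p₂, q⟩, h₂, hmax⟩ := F.toFinset.exists_max_image Prod.snd hne
  simp only [Multiset.mem_toFinset] at h₁ h₂ hmin hmax
  exact ⟨p, q₁, p₂, q, h₁, h₂, hmin, hmax⟩

theorem antitoneMatching_map_cons {p q : α} {F : Multiset (α × α)} (hp : ∀ e ∈ F, p ≤ e.1)
    (hq : ∀ e ∈ F, e.2 ≤ q) :
    antitoneMatching (((p, q) ::ₘ F).map Prod.fst) (((p, q) ::ₘ F).map Prod.snd)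
      = (p, q) ::ₘ antitoneMatching (F.map Prod.fst) (F.map Prod.snd) := by
  simp only [Multiset.map_cons]
  exact antitoneMatching_cons (by simpa using hp) fun b hb => by
    obtain ⟨e, he, rfl⟩ := Multiset.mem_map.mp hb
    exact hq e he

variable [AddCommMonoid β] [PartialOrder β] [IsOrderedCancelAddMonoid β]

theorem eq_antitoneMatching_or_totalWeight_lt {c : α → α → β} {s t : Set α}
    (hc : ∀ ⦃i i' j j'⦄, i ∈ s → i' ∈ s → j ∈ t → j' ∈ t → i < i' → j < j' →
      c i j' + c i' j < c i j + c i' j')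
    (F : Multiset (α × α)) (hF : ∀ e ∈ F, e.1 ∈ s ∧ e.2 ∈ t) :
    F = antitoneMatching (F.map Prod.fst) (F.map Prod.snd) ∨
      totalWeight c (antitoneMatching (F.map Prod.fst) (F.map Prod.snd)) < totalWeight c F := by
  induction hN : Multiset.card F using Nat.strong_induction_on generalizing F with
  | _ N ih =>
  rcases eq_or_ne F 0 with rfl | hne
  · simp [antitoneMatching_zero_left]
  obtain ⟨p, q₁, p₂, q, h₁, h₂, hmin, hmax⟩ := exists_min_fst_max_snd hne
  by_cases hpq : (p, q) ∈ F
  · obtain ⟨F', rfl⟩ : ∃ F', F = (p, q) ::ₘ F' := ⟨_, (Multiset.cons_erase hpq).symm⟩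
    rw [antitoneMatching_map_cons (fun e he => hmin e (Multiset.mem_cons_of_mem he))
      (fun e he => hmax e (Multiset.mem_cons_of_mem he))]
    rcases ih F'.card (by simp [← hN]) F' (fun e he => hF e (Multiset.mem_cons_of_mem he)) rfl
      with h | h
    · exact .inl (by rw [← h])
    · exact .inr (by simpa using h)
  · have hne₁₂ : (p, q₁) ≠ (p₂, q) := by
      rintro ⟨rfl, rfl⟩
      exact hpq h₁
    obtain ⟨F', rfl⟩ : ∃ F', F = (p, q₁) ::ₘ (p₂, q) ::ₘ F' :=
      ⟨_, by rw [Multiset.cons_erase (Multiset.mem_erase_of_ne hne₁₂.symm |>.mpr h₂),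
        Multiset.cons_erase h₁]⟩
    have hpp₂ : p < p₂ := (hmin (p₂, q) (by simp)).lt_of_ne (by rintro rfl; exact hpq (by simp))
    have hq₁q : q₁ < q := (hmax (p, q₁) (by simp)).lt_of_ne (by rintro rfl; exact hpq (by simp))
    set G := (p₂, q₁) ::ₘ F'
    have hG : totalWeight c (antitoneMatching (G.map Prod.fst) (G.map Prod.snd))
        ≤ totalWeight c G := by
      have hGst : ∀ e ∈ G, e.1 ∈ s ∧ e.2 ∈ t := Multiset.forall_mem_cons.mpr
        ⟨⟨(hF (p₂, q) (by simp)).1, (hF (p, q₁) (by simp)).2⟩, fun e he => hF e (by simp [he])⟩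
      rcases ih G.card (by simp [G, ← hN]) G hGst rfl with h | h
      · rw [← h]
      · exact h.le
    have hpG : ∀ e ∈ G, p ≤ e.1 :=
      Multiset.forall_mem_cons.mpr ⟨hpp₂.le, fun e he => hmin e (by simp [he])⟩
    have hqG : ∀ e ∈ G, e.2 ≤ q :=
      Multiset.forall_mem_cons.mpr ⟨hq₁q.le, fun e he => hmax e (by simp [he])⟩
    have hs₁ := hF (p, q₁) (by simp)
    have hs₂ := hF (p₂, q) (by simp)
    right
    calc totalWeight c (antitoneMatching _ _)
        = totalWeight c ((p, q) ::ₘ antitoneMatching (G.map Prod.fst) (G.map Prod.snd)) := by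
          rw [← antitoneMatching_map_cons hpG hqG]
          simp [G, Multiset.cons_swap]
      _ ≤ c p q + totalWeight c G := by rw [totalWeight_cons]; exact add_le_add le_rfl hG
      _ = c p q + c p₂ q₁ + totalWeight c F' := by simp [G, add_assoc]
      _ < c p q₁ + c p₂ q + totalWeight c F' :=
          add_lt_add_of_lt_of_le (hc hs₁.1 hs₂.1 hs₁.2 hs₂.2 hpp₂ hq₁q) le_rfl
      _ = _ := by simp [add_assoc]

end AntitoneMatching

section

variable {α : Type*}

def IsMatching (F : Multiset (α × α)) (P Q : Finset α) : Prop :=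
  F.map Prod.fst = P.val ∧ F.map Prod.snd = Q.val

namespace IsMatching

variable {F : Multiset (α × α)} {P Q : Finset α}

theorem zero : IsMatching (0 : Multiset (α × α)) ∅ ∅ := ⟨rfl, rfl⟩

theorem mem (h : IsMatching F P Q) {e : α × α} (he : e ∈ F) : e.1 ∈ P ∧ e.2 ∈ Q :=
  ⟨by simpa only [h.1, mem_val] using Multiset.mem_map_of_mem Prod.fst he,
    by simpa only [h.2, mem_val] using Multiset.mem_map_of_mem Prod.snd he⟩

theorem exists_mem_of_fst_mem (h : IsMatching F P Q) {x : α} (hx : x ∈ P) : ∃ y, (x, y) ∈ F := by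
  obtain ⟨e, he, rfl⟩ := Multiset.mem_map.mp (h.1 ▸ hx : x ∈ F.map Prod.fst)
  exact ⟨e.2, he⟩

theorem exists_mem_of_snd_mem (h : IsMatching F P Q) {y : α} (hy : y ∈ Q) : ∃ x, (x, y) ∈ F := by
  obtain ⟨e, he, rfl⟩ := Multiset.mem_map.mp (h.2 ▸ hy : y ∈ F.map Prod.snd)
  exact ⟨e.1, he⟩

theorem cons [DecidableEq α] (h : IsMatching F P Q) {x y : α} (hx : x ∉ P) (hy : y ∉ Q) :
    IsMatching ((x, y) ::ₘ F) (insert x P) (insert y Q) := by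
  simp [IsMatching, insert_val_of_notMem hx, insert_val_of_notMem hy, h.1, h.2]

theorem erase [DecidableEq α] (h : IsMatching F P Q) {e : α × α} (he : e ∈ F) :
    IsMatching (F.erase e) (P.erase e.1) (Q.erase e.2) := by
  rw [← Multiset.cons_erase he] at h
  simp only [IsMatching, Multiset.map_cons] at h
  simp [IsMatching, erase_val, ← h.1, ← h.2]

end IsMatching

end

theorem applySeq_cons_eq_some {p : ℕ × ℕ} {L : List (ℕ × ℕ)} {S T : Finset ℕ} :
    applySeq (p :: L) S = some T ↔
      ∃ T', applySeq L S = some T' ∧ p.1 ∈ T' ∧ p.2 ∉ T' ∧ T = insert p.2 (T'.erase p.1) := by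
  simp only [applySeq, Option.bind_eq_some_iff, Option.ite_none_right_eq_some, Option.some_inj]
  grind

theorem applySeq_subset {L : List (ℕ × ℕ)} {S T s : Finset ℕ} (hS : S ⊆ s)
    (hL : ∀ p ∈ L, p.2 ∈ s) (h : applySeq L S = some T) : T ⊆ s := by
  induction L generalizing T with
  | nil => exact (Option.some_inj.mp h) ▸ hS
  | cons p L ih =>
    obtain ⟨T', hT', -, -, rfl⟩ := applySeq_cons_eq_some.mp h
    exact insert_subset (hL p (by simp))
      ((erase_subset _ _).trans (ih (fun q hq => hL q (by simp [hq])) hT'))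

theorem applySeq_sdiff_subset {L : List (ℕ × ℕ)} {S T s : Finset ℕ} (hL : ∀ p ∈ L, p.2 ∈ s)
    (h : applySeq L S = some T) : T \ S ⊆ s :=
  sdiff_le_iff.mpr
    (applySeq_subset subset_union_left (fun p hp => mem_union_right _ (hL p hp)) h)

theorem snd_mem_Icc {n : ℕ} {L : List (ℕ × ℕ)} (hL : ∀ p ∈ L, 1 ≤ p.1 ∧ p.1 < p.2 ∧ p.2 ≤ n) :
    ∀ p ∈ L, p.2 ∈ Icc 1 n :=
  fun p hp => mem_Icc.mpr ⟨by linarith [hL p hp], (hL p hp).2.2⟩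

theorem IsMatching.exists_move {n k : ℕ} {a : ℕ → ℕ → ℤ} (hA : StrictTriangle n a)
    {T : Finset ℕ} (hT : T \ Icc 1 k ⊆ Icc 1 n) {M : Multiset (ℕ × ℕ)}
    (hM : IsMatching M (Icc 1 k \ T) (T \ Icc 1 k)) {x y : ℕ} (hx : 1 ≤ x) (hxy : x < y)
    (hy : y ≤ n) (hxT : x ∈ T) (hyT : y ∉ T) :
    ∃ F, IsMatching F (Icc 1 k \ insert y (T.erase x)) (insert y (T.erase x) \ Icc 1 k) ∧
      (F = (x, y) ::ₘ M ∨ totalWeight a F < a x y + totalWeight a M) := by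
  have hfst : ∀ {p}, p ∈ Icc 1 k \ T → 1 ≤ p ∧ p ≤ k := fun hp => by
    simp only [mem_sdiff, mem_Icc] at hp; omega
  have hsnd : ∀ {q}, q ∈ T \ Icc 1 k → k < q ∧ q ≤ n := fun hq => by
    have := hT hq
    simp only [mem_sdiff, mem_Icc] at hq this; omega
  rcases le_or_gt y k with hyk | hky
  · obtain ⟨q, hyq⟩ := hM.exists_mem_of_fst_mem (x := y) (by simp [hyT]; omega)
    have hq := hM.mem hyq
    refine ⟨(x, q) ::ₘ M.erase (y, q), ?_, .inr ?_⟩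
    · convert (hM.erase hyq).cons (x := x) (y := q) (by simp [hxT]) (notMem_erase _ _) using 1
      · ext z; simp only [mem_sdiff, mem_insert, mem_erase, mem_Icc]; grind
      · rw [insert_erase hq.2]; ext z; simp only [mem_sdiff, mem_insert, mem_erase, mem_Icc]; grind
    · rw [totalWeight_cons, ← add_totalWeight_erase a hyq]
      linarith [hA hx hxy (by linarith [(hsnd hq.2).1]) (hsnd hq.2).2]
  rcases le_or_gt x k with hxk | hkx
  · refine ⟨_, ?_, .inl rfl⟩
    convert hM.cons (x := x) (y := y) (by simp [hxT]) (by simp [hyT]) using 1 <;>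
      ext z <;> simp only [mem_sdiff, mem_insert, mem_erase, mem_Icc] <;> grind
  · obtain ⟨p, hpx⟩ := hM.exists_mem_of_snd_mem (y := x) (by simp [hxT]; omega)
    have hp := hM.mem hpx
    refine ⟨(p, y) ::ₘ M.erase (p, x), ?_, .inr ?_⟩
    · convert (hM.erase hpx).cons (x := p) (y := y) (notMem_erase _ _) (by simp [hyT]) using 1
      · rw [insert_erase hp.1]; ext z; simp only [mem_sdiff, mem_insert, mem_erase, mem_Icc]; grind
      · ext z; simp only [mem_sdiff, mem_insert, mem_erase, mem_Icc]; grind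
    · rw [totalWeight_cons, ← add_totalWeight_erase a hpx]
      linarith [hA (hfst hp.1).1 (by linarith [(hfst hp.1).2]) hxy hy]

theorem exists_isMatching_of_applySeq {n k : ℕ} {a : ℕ → ℕ → ℤ} (hA : StrictTriangle n a)
    {L : List (ℕ × ℕ)} (hL : ∀ p ∈ L, 1 ≤ p.1 ∧ p.1 < p.2 ∧ p.2 ≤ n)
    {T : Finset ℕ} (h : applySeq L (Icc 1 k) = some T) :
    ∃ F, IsMatching F (Icc 1 k \ T) (T \ Icc 1 k) ∧
      (F = ↑L ∨ totalWeight a F < totalWeight a ↑L) := by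
  induction L generalizing T with
  | nil =>
    obtain rfl := Option.some_inj.mp h
    exact ⟨0, by simpa using IsMatching.zero, .inl rfl⟩
  | cons p L ih =>
    obtain ⟨T, hT, hpT, hpT', rfl⟩ := applySeq_cons_eq_some.mp h
    have hLn : ∀ q ∈ L, 1 ≤ q.1 ∧ q.1 < q.2 ∧ q.2 ≤ n := fun q hq => hL q (by simp [hq])
    have hp := hL p (by simp)
    obtain ⟨M, hM, hML⟩ := ih hLn hT
    have hTn : T \ Icc 1 k ⊆ Icc 1 n := applySeq_sdiff_subset (snd_mem_Icc hLn) hT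
    obtain ⟨F, hF, hFM⟩ := hM.exists_move hA hTn hp.1 hp.2.1 hp.2.2 hpT hpT'
    refine ⟨F, hF, ?_⟩
    rw [show ((p :: L : List (ℕ × ℕ)) : Multiset (ℕ × ℕ)) = (p.1, p.2) ::ₘ ↑L from rfl]
    rcases hFM with rfl | hFM
    · rcases hML with rfl | hML
      · exact .inl rfl
      · right; simp only [totalWeight_cons]; linarith
    · right
      rw [totalWeight_cons]
      rcases hML with rfl | hML
      · exact hFM
      · linarith

theorem coe_canonPairs (k : ℕ) (I : Finset ℕ) :
    (canonPairs k I : Multiset (ℕ × ℕ)) = antitoneMatching (Icc 1 k \ I).val (I \ Icc 1 k).val := by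
  simp only [canonPairs, ← Finset.sort_val, Multiset.reverse_sort_le]
  rfl

theorem stmt8_general (n k : ℕ) (a : ℕ → ℕ → ℤ)
    (ha : ∀ i, 1 ≤ i → i + 2 ≤ n → a i (i+1) + a (i+1) (i+2) > a i (i+2))
    (hb : ∀ i j, 1 ≤ i → i + 1 < j → j + 1 ≤ n →
      a i j + a (i+1) (j+1) > a i (j+1) + a (i+1) j)
    (I : Finset ℕ) :
    ∀ L : List (ℕ × ℕ),
      (∀ p ∈ L, 1 ≤ p.1 ∧ p.1 < p.2 ∧ p.2 ≤ n) →
      applySeq L (Finset.Icc 1 k) = some I →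
      (L.map fun p => a p.1 p.2).sum
        = ((canonPairs k I).map fun pq => a pq.1 pq.2).sum →
      (L : Multiset (ℕ × ℕ)) = (canonPairs k I : Multiset (ℕ × ℕ)) := by
  intro L hL hLI hsum
  have hB := strictUncrossing_of_adjacent hb
  obtain ⟨F, hF, hFL⟩ := exists_isMatching_of_applySeq (strictTriangle_of_adjacent ha hB) hL hLI
  have hFI : antitoneMatching (F.map Prod.fst) (F.map Prod.snd) = canonPairs k I := by
    rw [hF.1, hF.2, coe_canonPairs]
  have hFbounds : ∀ e ∈ F, e.1 ∈ Set.Icc 1 k ∧ e.2 ∈ Set.Ioc k n := fun e he => by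
    have ⟨h₁, h₂⟩ := hF.mem he
    have := applySeq_sdiff_subset (snd_mem_Icc hL) hLI h₂
    simp only [mem_sdiff, mem_Icc, Set.mem_Icc, Set.mem_Ioc] at h₁ h₂ this ⊢
    omega
  have hcanon := eq_antitoneMatching_or_totalWeight_lt (c := a)
    (fun i i' j j' hi hi' hj hj' hii' hjj' => hB hi.1 hii' (hi'.2.trans_lt hj.1) hjj' hj'.2)
    F hFbounds
  rw [hFI] at hcanon
  replace hsum : totalWeight a L = totalWeight a (canonPairs k I) := by
    simpa [totalWeight] using hsum
  rcases hFL with rfl | hFL <;> rcases hcanon with hcanon | hcanon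
  · exact hcanon
  · exact absurd hsum hcanon.ne'
  · exact absurd hsum (hcanon ▸ hFL).ne'
  · exact absurd hsum (hcanon.trans hFL).ne'

/-- For a weight system with all inequalities (a), (b) strict, the minimizing
sequence of root vectors is unique up to permutation: it is the antichain matching
`{(p_1,q_1),…,(p_l,q_l)}`. -/
theorem stmt8 (n k : ℕ) (hn : 2 ≤ n) (a : ℕ → ℕ → ℤ)
    (ha : ∀ i, 1 ≤ i → i + 2 ≤ n → a i (i+1) + a (i+1) (i+2) > a i (i+2))
    (hb : ∀ i j, 1 ≤ i → i + 1 < j → j + 1 ≤ n →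
      a i j + a (i+1) (j+1) > a i (j+1) + a (i+1) j)
    (hk : 1 ≤ k) (hkn : k ≤ n)
    (I : Finset ℕ) (hI : I ⊆ Finset.Icc 1 n) (hcard : I.card = k) :
    ∀ L : List (ℕ × ℕ),
      (∀ p ∈ L, 1 ≤ p.1 ∧ p.1 < p.2 ∧ p.2 ≤ n) →
      applySeq L (Finset.Icc 1 k) = some I →
      (L.map fun p => a p.1 p.2).sum
        = ((canonPairs k I).map fun pq => a pq.1 pq.2).sum →
      (L : Multiset (ℕ × ℕ)) = (canonPairs k I : Multiset (ℕ × ℕ)) :=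
  stmt8_general n k a ha hb I
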